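/- If x* is a feasible point of a constrained minimization problem min f(x) s.t. g(x)=0, h(x)≥0 satisfying the KKT conditions with multipliers (λ*, μ*), and the Hessian of the Lagrangian ∇²ₓₓL(x*,λ*,μ*) is positive definite on the critical cone at (x*,λ*,μ*) (i.e., vᵀ∇²ₓₓL v > 0 for all nonzero v in the critical cone), then x* is a strict local minimizer. -/

import Mathlib

/-!
If `x*` were not a strict local minimizer, the feasible points `x ≠ x*` with `f x ≤ f x*` would
accumulate at `x*`, so (in finite dimension) the set `S` of such points has a nonzero vector `v`
in its positive tangent cone at `x*`. Complementary slackness and `μ ≥ 0` give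
`L x + μᵢ hᵢ x ≤ L x*` on `S` for every `i`, so first-order Fermat conditions along `S` put `v` in
the critical cone, while the second-order Taylor expansion of `L`, whose gradient vanishes at `x*`,
gives `vᵀ ∇²L v ≤ 0`: this contradicts positive definiteness on the critical cone.
-/

open Set Filter Topology

theorem fderiv_fderiv_apply_const {𝕜 E F : Type*} [NontriviallyNormedField 𝕜]
    [NormedAddCommGroup E] [NormedSpace 𝕜 E] [NormedAddCommGroup F] [NormedSpace 𝕜 F]
    {f : E → F} {a : E} (hf : DifferentiableAt 𝕜 (fderiv 𝕜 f) a) (v w : E) :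
    fderiv 𝕜 (fun x => fderiv 𝕜 f x v) a w = fderiv 𝕜 (fderiv 𝕜 f) a w v := by
  rw [fderiv_clm_apply hf (differentiableAt_const v)]
  simp

theorem ContDiff.taylor_mean_remainder_two_unitInterval {φ : ℝ → ℝ} (hφ : ContDiff ℝ 2 φ) :
    ∃ c ∈ Ioo (0 : ℝ) 1, φ 1 = φ 0 + deriv φ 0 + deriv (deriv φ) c / 2 := by
  obtain ⟨c, hc, hrem⟩ :=
    taylor_mean_remainder_lagrange_iteratedDeriv (n := 1) zero_ne_one hφ.contDiffOn
  rw [uIoo_of_le zero_le_one] at hc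
  refine ⟨c, hc, ?_⟩
  have h1 : iteratedDerivWithin 1 φ (uIcc 0 1) 0 = deriv φ 0 := by
    rw [iteratedDerivWithin_eq_iteratedDeriv (n := 1) (uniqueDiffOn_uIcc zero_ne_one)
      (hφ.of_le one_le_two).contDiffAt (by simp), iteratedDeriv_one]
  rw [taylor_within_apply, Finset.sum_range_succ, Finset.sum_range_one, h1,
    iteratedDeriv_succ, iteratedDeriv_one] at hrem
  norm_num [Nat.factorial] at hrem
  linarith

section

variable {E : Type*} [NormedAddCommGroup E] [NormedSpace ℝ E]

theorem ContDiff.taylor_mean_remainder_two_segment {L : E → ℝ} (hL : ContDiff ℝ 2 L) (a u : E) :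
    ∃ c ∈ Ioo (0 : ℝ) 1,
      L (a + u) = L a + fderiv ℝ L a u + fderiv ℝ (fderiv ℝ L) (a + c • u) u u / 2 := by
  have hline (t : ℝ) : HasDerivAt (fun t : ℝ => a + t • u) u t := by
    simpa using ((hasDerivAt_id t).smul_const u).const_add a
  have hd1 : deriv (fun t : ℝ => L (a + t • u)) = fun t => fderiv ℝ L (a + t • u) u :=
    funext fun t => ((hL.differentiable two_ne_zero _).hasFDerivAt.comp_hasDerivAt t
      (hline t)).deriv
  have hd2 (t : ℝ) : deriv (fun t : ℝ => fderiv ℝ L (a + t • u) u) t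
      = fderiv ℝ (fderiv ℝ L) (a + t • u) u u := by
    have hDL : Differentiable ℝ (fderiv ℝ L) :=
      (hL.fderiv_right (m := 1) le_rfl).differentiable one_ne_zero
    simpa using (((hDL _).hasFDerivAt.comp_hasDerivAt t (hline t)).clm_apply
      (hasDerivAt_const t u)).deriv
  have hφ : ContDiff ℝ 2 fun t : ℝ => L (a + t • u) := by fun_prop
  obtain ⟨c, hc, htaylor⟩ := hφ.taylor_mean_remainder_two_unitInterval
  refine ⟨c, hc, ?_⟩
  simpa [Function.comp_def, hd1, hd2] using htaylor

theorem exists_ne_zero_mem_posTangentConeAt_of_accPt [ProperSpace E] {s : Set E} {x : E}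
    (hx : AccPt x (𝓟 s)) : ∃ y ≠ 0, y ∈ posTangentConeAt s x := by
  have hpt (k : ℕ) : ∃ z ∈ Metric.ball x (1 / (k + 1)) ∩ s, z ≠ x :=
    accPt_iff_nhds.mp hx _ (Metric.ball_mem_nhds _ Nat.one_div_pos_of_nat)
  choose z hz hzx using hpt
  set d : ℕ → E := fun k => z k - x
  have hd0 (k : ℕ) : d k ≠ 0 := sub_ne_zero.mpr (hzx k)
  have hsphere (k : ℕ) : ‖d k‖₊⁻¹ • d k ∈ Metric.sphere (0 : E) 1 := by
    simp [NNReal.smul_def, norm_smul, hd0 k]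
  obtain ⟨y, hy, σ, hσ, hlim⟩ := (isCompact_sphere (0 : E) 1).tendsto_subseq hsphere
  refine ⟨y, ne_zero_of_mem_unit_sphere ⟨y, hy⟩, ?_⟩
  refine mem_tangentConeAt_of_seq atTop (fun k => ‖d (σ k)‖₊⁻¹) (d ∘ σ) ?_
    (.of_forall fun k => by simpa [d] using (hz (σ k)).2) hlim
  refine (squeeze_zero_norm (fun k => ?_) tendsto_one_div_add_atTop_nhds_zero_nat).comp
    hσ.tendsto_atTop
  simpa [d, dist_eq_norm] using (hz k).1.out.le

theorem IsLocalMaxOn.fderiv_fderiv_apply_nonpos {L : E → ℝ} {s : Set E} {a y : E}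
    (h : IsLocalMaxOn L s a) (hL : ContDiff ℝ 2 L) (hcrit : fderiv ℝ L a = 0)
    (hy : y ∈ posTangentConeAt s a) : fderiv ℝ (fderiv ℝ L) a y y ≤ 0 := by
  obtain ⟨ι, l, hl, c, d, hd₀, hds, hcd⟩ := exists_fun_of_mem_tangentConeAt hy
  choose θ hθ htaylor using fun n => hL.taylor_mean_remainder_two_segment a (d n)
  set B := fderiv ℝ (fderiv ℝ L)
  have hB : Continuous fun p : E × E => B p.1 p.2 p.2 :=
    ((((hL.fderiv_right (m := 1) le_rfl).continuous_fderiv one_ne_zero).comp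
      continuous_fst).clm_apply continuous_snd).clm_apply continuous_snd
  have hξ : Tendsto (fun n => a + θ n • d n) l (𝓝 a) := by
    have hθd : Tendsto (fun n => θ n • d n) l (𝓝 0) := by
      refine squeeze_zero_norm (fun n => ?_) (tendsto_norm_zero.comp hd₀)
      rw [norm_smul, Real.norm_of_nonneg (hθ n).1.le]
      exact mul_le_of_le_one_left (norm_nonneg _) (hθ n).2.le
    simpa using hθd.const_add a
  refine le_of_tendsto ((hB.tendsto (a, y)).comp (hξ.prodMk_nhds hcd)) ?_
  have hmem : Tendsto (fun n => a + d n) l (𝓝[s] a) := by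
    simpa using tendsto_nhdsWithin_iff.2 ⟨tendsto_const_nhds.add hd₀, hds⟩
  filter_upwards [hmem.eventually h] with n hn
  have hquad : B (a + θ n • d n) (c n • d n) (c n • d n)
      = 2 * (c n : ℝ) ^ 2 * (L (a + d n) - L a) := by
    rw [htaylor n, hcrit]
    simp only [NNReal.smul_def, map_smul, smul_apply, smul_eq_mul, zero_apply]
    ring
  simp only [Function.comp_apply, hquad]
  exact mul_nonpos_of_nonneg_of_nonpos (by positivity) (sub_nonpos.mpr hn)

variable {ι κ : Type*} {g : E → ι → ℝ} {h : E → κ → ℝ} {mu : κ → ℝ} {xs : E}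

def criticalCone (g : E → ι → ℝ) (h : E → κ → ℝ) (mu : κ → ℝ) (x : E) : Set E :=
  {v | (∀ i, fderiv ℝ (fun y => g y i) x v = 0) ∧
    (∀ i, h x i = 0 → 0 < mu i → fderiv ℝ (fun y => h y i) x v = 0) ∧
    (∀ i, h x i = 0 → mu i = 0 → 0 ≤ fderiv ℝ (fun y => h y i) x v)}

theorem posTangentConeAt_subset_criticalCone [Fintype κ] {L : E → ℝ} {S : Set E}
    (hg : ∀ i, DifferentiableAt ℝ (fun x => g x i) xs)
    (hh : ∀ i, DifferentiableAt ℝ (fun x => h x i) xs)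
    (hL : DifferentiableAt ℝ L xs) (hstat : fderiv ℝ L xs = 0) (hmu : ∀ i, 0 ≤ mu i)
    (hgS : ∀ x ∈ S, g x = g xs) (hhS : ∀ x ∈ S, ∀ i, 0 ≤ h x i)
    (hLS : ∀ x ∈ S, L x + ∑ i, mu i * h x i ≤ L xs) :
    posTangentConeAt S xs ⊆ criticalCone g h mu xs := by
  intro v hv
  have hactive (i : κ) (hi : h xs i = 0) : 0 ≤ fderiv ℝ (fun x => h x i) xs v :=
    (isMinOn_iff.mpr fun x hx => hi ▸ hhS x hx i).localize.hasFDerivWithinAt_nonneg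
      (hh i).hasFDerivAt.hasFDerivWithinAt hv
  refine ⟨fun i => ?_, fun i hi hmui => ?_, fun i hi _ => hactive i hi⟩
  · have hconst (x : E) (hx : x ∈ S) : g x i = g xs i := congrFun (hgS x hx) i
    exact le_antisymm
      ((isMaxOn_iff.mpr fun x hx => (hconst x hx).le).localize.hasFDerivWithinAt_nonpos
        (hg i).hasFDerivAt.hasFDerivWithinAt hv)
      ((isMinOn_iff.mpr fun x hx => (hconst x hx).ge).localize.hasFDerivWithinAt_nonneg
        (hg i).hasFDerivAt.hasFDerivWithinAt hv)
  · have hmax : IsMaxOn (fun x => L x + mu i * h x i) S xs := isMaxOn_iff.mpr fun x hx => by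
      have := Finset.single_le_sum (fun j _ => mul_nonneg (hmu j) (hhS x hx j))
        (Finset.mem_univ i)
      simp only [hi, mul_zero, add_zero]
      linarith [hLS x hx]
    have hslope := hmax.localize.hasFDerivWithinAt_nonpos
      (hL.hasFDerivAt.add ((hh i).hasFDerivAt.const_mul (mu i))).hasFDerivWithinAt hv
    rw [hstat, zero_add, smul_apply, smul_eq_mul] at hslope
    exact le_antisymm (nonpos_of_mul_nonpos_right hslope hmui) (hactive i hi)

end

theorem second_order_sufficient_conditions_general {n n2 n3 : ℕ}
    (f : (Fin n → ℝ) → ℝ) (g : (Fin n → ℝ) → Fin n2 → ℝ) (h : (Fin n → ℝ) → Fin n3 → ℝ)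
    (hf : ContDiff ℝ 2 f) (hg : ContDiff ℝ 2 g) (hh : ContDiff ℝ 2 h)
    (xs : Fin n → ℝ) (lam : Fin n2 → ℝ) (mu : Fin n3 → ℝ)
    (L : (Fin n → ℝ) → ℝ)
    (hL : L = fun x => f x - ∑ i, lam i * g x i - ∑ i, mu i * h x i)
    -- KKT conditions at x* with multipliers (λ*, μ*)
    (hfeas_g : g xs = 0)
    (hmu : ∀ i, 0 ≤ mu i) (hcompl : ∀ i, mu i * h xs i = 0)
    (hstat : fderiv ℝ L xs = 0)
    -- positive definiteness of the Hessian of the Lagrangian on the critical cone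
    (hsosc : ∀ v : Fin n → ℝ, v ≠ 0 →
      (∀ i, fderiv ℝ (fun x => g x i) xs v = 0) →
      (∀ i, h xs i = 0 → 0 < mu i → fderiv ℝ (fun x => h x i) xs v = 0) →
      (∀ i, h xs i = 0 → mu i = 0 → 0 ≤ fderiv ℝ (fun x => h x i) xs v) →
      0 < fderiv ℝ (fun y => fderiv ℝ L y v) xs v) :
    -- x* is a strict local minimizer over the feasible set
    ∃ ε > 0, ∀ x : Fin n → ℝ, x ≠ xs → ‖x - xs‖ < ε →
      g x = 0 → (∀ i, 0 ≤ h x i) → f xs < f x := by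
  set S := {x | g x = 0 ∧ (∀ i, 0 ≤ h x i) ∧ f x ≤ f xs}
  suffices hiso : ¬AccPt xs (𝓟 S) by
    obtain ⟨ε, hε, hball⟩ := Metric.eventually_nhds_iff.mp
      (not_frequently.mp (accPt_iff_frequently.not.mp hiso))
    refine ⟨ε, hε, fun x hx hxε hgx hhx => not_le.mp fun hfx => ?_⟩
    exact hball (by simpa [dist_eq_norm] using hxε) ⟨hx, hgx, hhx, hfx⟩
  intro hacc
  obtain ⟨v, hv0, hv⟩ := exists_ne_zero_mem_posTangentConeAt_of_accPt hacc
  have hLC : ContDiff ℝ 2 L := by rw [hL]; fun_prop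
  have hLS : ∀ x ∈ S, L x + ∑ i, mu i * h x i ≤ L xs := by
    rintro x ⟨hgx, -, hfx⟩
    simpa [hL, hgx, hfeas_g, hcompl] using hfx
  obtain ⟨hcone_g, hcone_strong, hcone_weak⟩ := posTangentConeAt_subset_criticalCone
    (differentiableAt_pi.mp (hg.differentiable two_ne_zero xs))
    (differentiableAt_pi.mp (hh.differentiable two_ne_zero xs))
    (hLC.differentiable two_ne_zero xs) hstat hmu (fun x hx => hx.1.trans hfeas_g.symm)
    (fun x hx => hx.2.1) hLS hv
  have hLmax : IsMaxOn L S xs := isMaxOn_iff.mpr fun x hx =>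
    (le_add_of_nonneg_right (Finset.sum_nonneg fun j _ => mul_nonneg (hmu j) (hx.2.1 j))).trans
      (hLS x hx)
  have hcurv := hLmax.localize.fderiv_fderiv_apply_nonpos hLC hstat hv
  have hpos := hsosc v hv0 hcone_g hcone_strong hcone_weak
  rw [fderiv_fderiv_apply_const
    ((hLC.fderiv_right (m := 1) le_rfl).differentiable one_ne_zero xs)] at hpos
  linarith

/-- Second-order sufficient conditions: a KKT point at which the Hessian of the
Lagrangian is positive definite on the critical cone is a strict local minimizer. -/
theorem second_order_sufficient_conditions {n n2 n3 : ℕ}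
    (f : (Fin n → ℝ) → ℝ) (g : (Fin n → ℝ) → Fin n2 → ℝ) (h : (Fin n → ℝ) → Fin n3 → ℝ)
    (hf : ContDiff ℝ 2 f) (hg : ContDiff ℝ 2 g) (hh : ContDiff ℝ 2 h)
    (xs : Fin n → ℝ) (lam : Fin n2 → ℝ) (mu : Fin n3 → ℝ)
    (L : (Fin n → ℝ) → ℝ)
    (hL : L = fun x => f x - ∑ i, lam i * g x i - ∑ i, mu i * h x i)
    -- KKT conditions at x* with multipliers (λ*, μ*)
    (hfeas_g : g xs = 0) (hfeas_h : ∀ i, 0 ≤ h xs i)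
    (hmu : ∀ i, 0 ≤ mu i) (hcompl : ∀ i, mu i * h xs i = 0)
    (hstat : fderiv ℝ L xs = 0)
    -- positive definiteness of the Hessian of the Lagrangian on the critical cone
    (hsosc : ∀ v : Fin n → ℝ, v ≠ 0 →
      (∀ i, fderiv ℝ (fun x => g x i) xs v = 0) →
      (∀ i, h xs i = 0 → 0 < mu i → fderiv ℝ (fun x => h x i) xs v = 0) →
      (∀ i, h xs i = 0 → mu i = 0 → 0 ≤ fderiv ℝ (fun x => h x i) xs v) →
      0 < fderiv ℝ (fun y => fderiv ℝ L y v) xs v) :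
    -- x* is a strict local minimizer over the feasible set
    ∃ ε > 0, ∀ x : Fin n → ℝ, x ≠ xs → ‖x - xs‖ < ε →
      g x = 0 → (∀ i, 0 ≤ h x i) → f xs < f x :=
  second_order_sufficient_conditions_general f g h hf hg hh xs lam mu L hL hfeas_g hmu hcompl hstat
    hsosc
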